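/- Let (Ω, 𝔽, P) be a probability space, let c* ∈ ℝ, and let (c_k)_{k≥1} be real-valued random variables such that almost surely c* ≤ c_{k+1} ≤ c_k for all k ≥ 1. Suppose that for every ε > 0 there exists p > 0 such that for every k ≥ 1, P({c_k ≤ c* + ε} ∩ Z_{k−1}) ≥ p · P(Z_{k−1}), where Z₀ = Ω and Z_{k−1} = {c₁ > c* + ε} ∩ ⋯ ∩ {c_{k−1} > c* + ε} for k ≥ 2. Then c_k converges to c* almost surely as k → ∞. -/

import Mathlib

open MeasureTheory Filter Topology
open scoped ENNReal

/-! Fix `ε > 0` and let `Z k` be the event that none of `c 1, …, c k` is within `ε` of `c*`.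
These events decrease, and each step removes at least `p · P (Z k) ≥ p · P (⋂ Z)` of their mass,
so the limit `L = P (⋂ Z)` satisfies `p L + L ≤ L`, i.e. `L = 0`. Hence almost surely the
incumbent eventually comes within every `1 / (n + 1)` of `c*`; being nonincreasing and bounded
below by `c*`, it then converges to `c*`. -/

theorem measure_iInter_eq_zero_of_mul_le_measure_sdiff {Ω : Type*} [MeasurableSpace Ω]
    {μ : Measure Ω} [IsFiniteMeasure μ] {s : ℕ → Set Ω} (hs : ∀ k, MeasurableSet (s k))
    (hanti : Antitone s) {p : ℝ≥0∞} (hp : p ≠ 0)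
    (hstep : ∀ k, p * μ (s k) ≤ μ (s k \ s (k + 1))) :
    μ (⋂ k, s k) = 0 := by
  set L := μ (⋂ k, s k)
  have hlim : Tendsto (fun k => μ (s k)) atTop (𝓝 L) :=
    tendsto_measure_iInter_atTop (fun k => (hs k).nullMeasurableSet) hanti
      ⟨0, measure_ne_top μ _⟩
  have hle : ∀ k, p * L + μ (s (k + 1)) ≤ μ (s k) := fun k =>
    calc p * L + μ (s (k + 1))
        ≤ μ (s k \ s (k + 1)) + μ (s k ∩ s (k + 1)) := by
          rw [Set.inter_eq_right.2 (hanti k.le_succ)]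
          gcongr
          exact (mul_le_mul_right (measure_mono (Set.iInter_subset s k)) p).trans (hstep k)
      _ = μ (s k) := measure_sdiff_add_inter _ (hs (k + 1))
  have hpL : p * L + L ≤ 0 + L := by
    rw [zero_add]
    exact le_of_tendsto_of_tendsto' ((hlim.comp (tendsto_add_atTop_nat 1)).const_add _) hlim hle
  have : p * L = 0 :=
    nonpos_iff_eq_zero.1 ((ENNReal.add_le_add_iff_right (measure_ne_top μ _)).1 hpL)
  exact (mul_eq_zero.1 this).resolve_left hp

theorem ae_exists_le_of_mul_le_measure_first_hit {Ω : Type*} [MeasurableSpace Ω]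
    {P : Measure Ω} [IsFiniteMeasure P] {c : ℕ → Ω → ℝ} (hc : ∀ k, Measurable (c k)) {a : ℝ}
    {p : ℝ≥0∞} (hp : p ≠ 0)
    (h : ∀ k : ℕ, 1 ≤ k →
      p * P (⋂ m ∈ Finset.Icc 1 (k - 1), {ω | a < c m ω}) ≤
        P ({ω | c k ω ≤ a} ∩ ⋂ m ∈ Finset.Icc 1 (k - 1), {ω | a < c m ω})) :
    ∀ᵐ ω ∂P, ∃ m, 1 ≤ m ∧ c m ω ≤ a := by
  set Z : ℕ → Set Ω := fun k => ⋂ m ∈ Finset.Icc 1 k, {ω | a < c m ω}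
  have hZ : ∀ k, MeasurableSet (Z k) := fun k =>
    Finset.measurableSet_biInter _ fun m _ => measurableSet_lt measurable_const (hc m)
  have hanti : Antitone Z := fun i j hij ω hω => by
    simp only [Z, Set.mem_iInter, Finset.mem_Icc] at hω ⊢
    exact fun m hm => hω m ⟨hm.1, hm.2.trans hij⟩
  have hsdiff : ∀ k, Z k \ Z (k + 1) = {ω | c (k + 1) ω ≤ a} ∩ Z k := fun k => by
    ext ω
    simp only [Z, Set.mem_sdiff, Set.mem_inter_iff, Set.mem_iInter, Finset.mem_Icc,
      Set.mem_ofPred_eq, not_forall, not_lt]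
    constructor
    · rintro ⟨hZk, m, ⟨hm1, hm⟩, hcm⟩
      obtain rfl | hmk := (Nat.le_succ_iff.1 hm).symm
      · exact ⟨hcm, hZk⟩
      · exact absurd (hZk m ⟨hm1, hmk⟩) hcm.not_gt
    · rintro ⟨hck, hZk⟩
      exact ⟨hZk, k + 1, ⟨Nat.le_add_left 1 k, le_rfl⟩, hck⟩
  have hnull : P (⋂ k, Z k) = 0 :=
    measure_iInter_eq_zero_of_mul_le_measure_sdiff hZ hanti hp fun k => by
      simpa only [hsdiff, Nat.add_sub_cancel] using h (k + 1) (Nat.le_add_left 1 k)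
  refine ae_iff.2 (measure_mono_null (fun ω hω => ?_) hnull)
  simp only [Set.mem_ofPred_eq, not_exists, not_and, not_le] at hω
  simp only [Z, Set.mem_iInter, Finset.mem_Icc, Set.mem_ofPred_eq]
  exact fun _ m hm => hω m hm.1

theorem tendsto_of_antitone_of_forall_exists_lt {u : ℕ → ℝ} {b : ℝ} (hu : Antitone u)
    (hb : ∀ k, b ≤ u k) (h : ∀ b' > b, ∃ k, u k < b') : Tendsto u atTop (𝓝 b) :=
  tendsto_order.2 ⟨fun _ ha => Eventually.of_forall fun k => ha.trans_le (hb k),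
    fun b' hb' => let ⟨m, hm⟩ := h b' hb'
      eventually_atTop.2 ⟨m, fun _ hk => (hu hk).trans_lt hm⟩⟩

/-- Probabilistic skeleton of Theorem 2: incumbent costs `c_k` never increase, stay above
`c*`, and in each iteration, conditioned on never yet having come within `ε` of `c*`
(the event `Z_{k−1}`), a solution of cost at most `c* + ε` is produced with probability
at least `p > 0`. Then `c_k → c*` almost surely. -/
theorem stmt_11 (Ω : Type*) [MeasurableSpace Ω] (P : Measure Ω) [IsProbabilityMeasure P]
    (cstar : ℝ) (c : ℕ → Ω → ℝ) (hcmeas : ∀ k, Measurable (c k))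
    (hmono : ∀ᵐ ω ∂P, ∀ k : ℕ, 1 ≤ k → cstar ≤ c (k + 1) ω ∧ c (k + 1) ω ≤ c k ω)
    (h : ∀ ε : ℝ, 0 < ε → ∃ p : ℝ≥0∞, 0 < p ∧ ∀ k : ℕ, 1 ≤ k →
      p * P (⋂ m ∈ Finset.Icc 1 (k - 1), {ω | cstar + ε < c m ω}) ≤
        P ({ω | c k ω ≤ cstar + ε} ∩
          ⋂ m ∈ Finset.Icc 1 (k - 1), {ω | cstar + ε < c m ω})) :
    ∀ᵐ ω ∂P, Filter.Tendsto (fun k => c k ω) Filter.atTop (nhds cstar) := by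
  have hhit : ∀ n : ℕ, ∀ᵐ ω ∂P, ∃ m, 1 ≤ m ∧ c m ω ≤ cstar + 1 / (n + 1) := fun n => by
    obtain ⟨p, hp, hp_step⟩ := h _ Nat.one_div_pos_of_nat
    exact ae_exists_le_of_mul_le_measure_first_hit hcmeas hp.ne' hp_step
  filter_upwards [ae_all_iff.2 hhit, hmono] with ω hhit hmono
  have hsucc : ∀ k, cstar ≤ c (k + 2) ω ∧ c (k + 2) ω ≤ c (k + 1) ω := fun k =>
    hmono (k + 1) (Nat.le_add_left 1 k)
  refine (tendsto_add_atTop_iff_nat 1).1 <| tendsto_of_antitone_of_forall_exists_lt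
    (antitone_nat_of_succ_le fun k => (hsucc k).2)
    (fun k => (hsucc k).1.trans (hsucc k).2) fun b' hb' => ?_
  obtain ⟨n, hn⟩ := exists_nat_one_div_lt (sub_pos.2 hb')
  obtain ⟨m, hm1, hm⟩ := hhit n
  exact ⟨m - 1, by rw [Nat.sub_add_cancel hm1]; linarith⟩
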